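/- arXiv:1910.10268 — 2 statements merged into one kernel-verified Lean document; each statement's English description precedes it below -/
import Mathlib

section
/- For convex bodies K, T ⊂ ℝⁿ containing the origin and λ ∈ (0,1), the polar of the Minkowski average is contained in the Minkowski average of the polars: ((1-λ)K + λT)° ⊆ (1-λ)K° + λT°. -/
open scoped Pointwise

/-- The polar of a set in Euclidean space. -/
def polarSet {n : ℕ} (K : Set (EuclideanSpace ℝ (Fin n))) : Set (EuclideanSpace ℝ (Fin n)) :=
  {y | ∀ x ∈ K, (inner ℝ x y : ℝ) ≤ 1}

/-- The polar of a Minkowski average is contained in the Minkowski average of the polars. -/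
theorem polar_combo_subset (n : ℕ) (K T : Set (EuclideanSpace ℝ (Fin n)))
    (hK : Convex ℝ K) (hT : Convex ℝ T) (hKc : IsCompact K) (hTc : IsCompact T)
    (hK0 : (0 : EuclideanSpace ℝ (Fin n)) ∈ K) (hT0 : (0 : EuclideanSpace ℝ (Fin n)) ∈ T)
    (l : ℝ) (hl0 : 0 < l) (hl1 : l < 1) :
    polarSet ((1 - l) • K + l • T) ⊆ (1 - l) • polarSet K + l • polarSet T := by
  intro y hy
  -- maxima of the linear functional on K and T
  have hcont : Continuous fun x : EuclideanSpace ℝ (Fin n) => (inner ℝ x y : ℝ) :=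
    continuous_id.inner continuous_const
  obtain ⟨x₀, hx₀K, hx₀max⟩ := hKc.exists_isMaxOn ⟨0, hK0⟩ hcont.continuousOn
  obtain ⟨z₀, hz₀T, hz₀max⟩ := hTc.exists_isMaxOn ⟨0, hT0⟩ hcont.continuousOn
  set a : ℝ := inner ℝ x₀ y with ha
  set b : ℝ := inner ℝ z₀ y with hb
  have haK : ∀ x ∈ K, (inner ℝ x y : ℝ) ≤ a := fun x hx => hx₀max hx
  have hbT : ∀ z ∈ T, (inner ℝ z y : ℝ) ≤ b := fun z hz => hz₀max hz
  have ha0 : 0 ≤ a := by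
    have := haK 0 hK0
    simpa using this
  have hb0 : 0 ≤ b := by
    have := hbT 0 hT0
    simpa using this
  -- the key inequality (1-l)a + l b ≤ 1
  have hcomb : (1 - l) * a + l * b ≤ 1 := by
    have hmem : (1 - l) • x₀ + l • z₀ ∈ (1 - l) • K + l • T :=
      Set.add_mem_add (Set.smul_mem_smul_set hx₀K) (Set.smul_mem_smul_set hz₀T)
    have := hy _ hmem
    rwa [inner_add_left, real_inner_smul_left, real_inner_smul_left] at this
  set D : ℝ := (1 - l) * b + l * a with hD
  have hD0 : 0 ≤ D := by
    have h1 : (0:ℝ) ≤ (1 - l) * b := mul_nonneg (by linarith) hb0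
    have h2 : (0:ℝ) ≤ l * a := mul_nonneg hl0.le ha0
    linarith [h1, h2]
  rcases eq_or_lt_of_le hD0 with hDz | hDpos
  · -- D = 0 forces a = b = 0, so y is in both polars
    have haz : a = 0 := by nlinarith
    have hbz : b = 0 := by nlinarith
    have hyK : y ∈ polarSet K := fun x hx => le_trans (haK x hx) (by rw [haz]; norm_num)
    have hyT : y ∈ polarSet T := fun z hz => le_trans (hbT z hz) (by rw [hbz]; norm_num)
    have : y = (1 - l) • y + l • y := by
      rw [← add_smul]; norm_num
    rw [this]
    exact Set.add_mem_add (Set.smul_mem_smul_set hyK) (Set.smul_mem_smul_set hyT)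
  · -- main case: use s = b/D, t = a/D
    have hab : a * b ≤ D := by nlinarith [sq_nonneg (a - b), mul_pos hl0 (by linarith : (0:ℝ) < 1 - l)]
    have hsK : (b / D) • y ∈ polarSet K := by
      intro x hx
      rw [real_inner_smul_right]
      have h1 : (inner ℝ x y : ℝ) ≤ a := haK x hx
      rw [div_mul_eq_mul_div, div_le_one hDpos]
      nlinarith [mul_le_mul_of_nonneg_left h1 hb0]
    have htT : (a / D) • y ∈ polarSet T := by
      intro z hz
      rw [real_inner_smul_right]
      have h1 : (inner ℝ z y : ℝ) ≤ b := hbT z hz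
      rw [div_mul_eq_mul_div, div_le_one hDpos]
      nlinarith [mul_le_mul_of_nonneg_left h1 ha0]
    have hyeq : y = (1 - l) • ((b / D) • y) + l • ((a / D) • y) := by
      rw [smul_smul, smul_smul, ← add_smul]
      have : (1 - l) * (b / D) + l * (a / D) = 1 := by
        field_simp
        exact hD.symm
      rw [this, one_smul]
    rw [hyeq]
    exact Set.add_mem_add (Set.smul_mem_smul_set hsK) (Set.smul_mem_smul_set htT)
end

section
/- For every ε > 0 there exist convex bodies K, T ⊂ ℝⁿ with Vol_n(K) = Vol_n(T) = 1 and Vol_n(K ∩ T) < ε, both containing the origin. Consequently, with φ = ‖·‖_K and ψ = ‖·‖_T, the ratio Vol(φ ⊠_{1/2} ψ) / min{Vol(φ), Vol(ψ)} = Vol_n(K ∩ T) can be made arbitrarily small; i.e., the volume functional Vol(φ) = ∫ e^{-φ} is not quasi-concave with respect to the ⊠ structure. -/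
/-! For a symmetric convex body `L`, the layer-cake formula behind
`measure_lt_one_eq_integral_div_gamma` gives `∫ e^{-‖x‖_L} = n! Vol(L)`, while for any set `S` the
integrand `e^{-‖x‖_S}` is at least `e⁻¹` on `S`, so `∫ e^{-‖x‖_S} ≥ e⁻¹ Vol(S)`. The unit cubes
`K = [-δ, 1 - δ]ⁿ` and `T = -K` contain the origin in their interiors, and `K ∩ T = [-δ, δ]ⁿ`
is symmetric of volume `(2δ)ⁿ`, so the ratio in question is at most `e · n! (2δ)ⁿ → 0`. -/

open MeasureTheory ENNReal

open Module Filter Topology Nat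

theorem lintegral_exp_neg_gauge {E : Type*} [NormedAddCommGroup E] [NormedSpace ℝ E]
    [FiniteDimensional ℝ E] [MeasurableSpace E] [BorelSpace E] (μ : Measure E)
    [μ.IsAddHaarMeasure] {s : Set E} (hconv : Convex ℝ s) (hneg : ∀ x ∈ s, -x ∈ s)
    (hs₀ : s ∈ 𝓝 0) (hbdd : Bornology.IsBounded s) :
    ∫⁻ x, ENNReal.ofReal (Real.exp (-gauge s x)) ∂μ = (finrank ℝ E)! * μ s := by
  have habs : Absorbent ℝ s := absorbent_nhds_zero hs₀
  have hbal : Balanced ℝ s := (balanced_iff_neg_mem hconv).2 fun x hx => hneg x hx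
  have key := measure_lt_one_eq_integral_div_gamma μ (g := gauge s) gauge_zero (gauge_neg hneg)
    (gauge_add_le hconv habs)
    ((gauge_eq_zero habs (NormedSpace.isVonNBounded_of_isBounded ℝ hbdd)).1)
    (fun r x => (gauge_smul hbal r x).le) one_pos
  simp only [Real.rpow_one, div_one] at key
  rw [setOfPred_gauge_lt_one_eq_interior hconv hs₀,
    measure_interior_of_null_frontier (hconv.addHaar_frontier μ),
    Real.Gamma_nat_eq_factorial] at key
  -- A non-integrable integrand would have Bochner integral `0`, contradicting `0 < μ s`.
  set I := ∫ x, Real.exp (-gauge s x) ∂μ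
  have hI : Integrable (fun x => Real.exp (-gauge s x)) μ := by
    refine Integrable.of_integral_ne_zero fun h0 => ?_
    have := (Measure.measure_pos_of_mem_nhds μ hs₀).ne'
    simp [key, I, h0] at this
  rw [← ofReal_integral_eq_lintegral_ofReal hI (ae_of_all _ fun x => (Real.exp_pos _).le), key,
    ← ENNReal.ofReal_natCast, ← ENNReal.ofReal_mul (by positivity), mul_div_cancel₀]
  positivity

theorem ofReal_exp_neg_one_mul_le_lintegral_exp_neg_gauge {E : Type*} [AddCommGroup E]
    [Module ℝ E] [MeasurableSpace E] (μ : Measure E) {s : Set E} (hs : MeasurableSet s) :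
    ENNReal.ofReal (Real.exp (-1)) * μ s ≤ ∫⁻ x, ENNReal.ofReal (Real.exp (-gauge s x)) ∂μ :=
  calc ENNReal.ofReal (Real.exp (-1)) * μ s = ∫⁻ _ in s, ENNReal.ofReal (Real.exp (-1)) ∂μ :=
        (setLIntegral_const s _).symm
    _ ≤ ∫⁻ x in s, ENNReal.ofReal (Real.exp (-gauge s x)) ∂μ :=
        setLIntegral_mono' hs fun _ hx =>
          ENNReal.ofReal_le_ofReal (Real.exp_le_exp.2 (neg_le_neg (gauge_le_one_of_mem hx)))
    _ ≤ ∫⁻ x, ENNReal.ofReal (Real.exp (-gauge s x)) ∂μ := setLIntegral_le_lintegral _ _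

def cube (ι : Type*) (a b : ℝ) : Set (ι → ℝ) := Set.univ.pi fun _ => Set.Icc a b

section cube

variable {ι : Type*} {a b : ℝ}

theorem convex_cube : Convex ℝ (cube ι a b) := convex_pi fun _ _ => convex_Icc a b

theorem isCompact_cube : IsCompact (cube ι a b) := isCompact_univ_pi fun _ => isCompact_Icc

theorem measurableSet_cube [Countable ι] : MeasurableSet (cube ι a b) :=
  MeasurableSet.univ_pi fun _ => measurableSet_Icc

theorem cube_mem_nhds_zero [Finite ι] (ha : a < 0) (hb : 0 < b) : cube ι a b ∈ 𝓝 0 :=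
  set_pi_mem_nhds Set.finite_univ fun _ _ => Icc_mem_nhds ha hb

theorem neg_mem_cube_neg {r : ℝ} {x : ι → ℝ} (hx : x ∈ cube ι (-r) r) : -x ∈ cube ι (-r) r :=
  fun i _ => ⟨neg_le_neg (hx i trivial).2, by simpa using neg_le_neg (hx i trivial).1⟩

theorem cube_inter_cube {a' b' : ℝ} :
    cube ι a b ∩ cube ι a' b' = cube ι (max a a') (min b b') := by
  simp only [cube, ← Set.pi_inter_distrib, Set.Icc_inter_Icc]

theorem volume_cube [Fintype ι] :
    volume (cube ι a b) = ENNReal.ofReal (b - a) ^ Fintype.card ι := by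
  simp [cube, Real.volume_Icc_pi]

end cube

/-- For every `ε > 0` there are convex bodies `K, T` of unit volume containing the origin
with `Vol(K ∩ T) < ε`; consequently `∫ e^{-‖·‖_{K∩T}} < ε · min(∫ e^{-‖·‖_K}, ∫ e^{-‖·‖_T})`,
so the volume functional is not quasi-concave with respect to `⊠` (recall
`‖·‖_K ⊠_{1/2} ‖·‖_T = ‖·‖_{K∩T}`). -/
theorem vol_not_quasiConcave (n : ℕ) (hn : 0 < n) (ε : ℝ) (hε : 0 < ε) :
    ∃ K T : Set (Fin n → ℝ),
      Convex ℝ K ∧ Convex ℝ T ∧ IsCompact K ∧ IsCompact T ∧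
      (0 : Fin n → ℝ) ∈ interior K ∧ (0 : Fin n → ℝ) ∈ interior T ∧
      volume K = 1 ∧ volume T = 1 ∧ volume (K ∩ T) < ENNReal.ofReal ε ∧
      (∫⁻ x, ENNReal.ofReal (Real.exp (-gauge (K ∩ T) x))) <
        ENNReal.ofReal ε *
          min (∫⁻ x, ENNReal.ofReal (Real.exp (-gauge K x)))
            (∫⁻ x, ENNReal.ofReal (Real.exp (-gauge T x))) := by
  obtain ⟨δ, ⟨hδ₀, hδ₁⟩, hδ⟩ : ∃ δ : ℝ, δ ∈ Set.Ioo 0 (1 / 2) ∧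
      (n ! : ℝ) * (2 * δ) ^ n < ε * Real.exp (-1) := by
    have hlim : Tendsto (fun δ : ℝ => (n ! : ℝ) * (2 * δ) ^ n) (𝓝[>] 0) (𝓝 0) := by
      have hcont : Continuous fun δ : ℝ => (n ! : ℝ) * (2 * δ) ^ n := by fun_prop
      simpa [hn.ne'] using (hcont.tendsto 0).mono_left nhdsWithin_le_nhds
    exact (Filter.Eventually.and (Ioo_mem_nhdsGT (by norm_num))
      (hlim.eventually (gt_mem_nhds (by positivity)))).exists
  set K := cube (Fin n) (-δ) (1 - δ)
  set T := cube (Fin n) (δ - 1) δ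
  have hK : volume K = 1 := by simp [K, volume_cube]
  have hT : volume T = 1 := by simp [T, volume_cube]
  have hKT : K ∩ T = cube (Fin n) (-δ) δ := by
    rw [cube_inter_cube, max_eq_left (by linarith), min_eq_right (by linarith)]
  have hvol_KT : volume (K ∩ T) = ENNReal.ofReal ((2 * δ) ^ n) := by
    rw [hKT, volume_cube, Fintype.card_fin, ENNReal.ofReal_pow (by linarith)]
    ring_nf
  have hlint_KT : ∫⁻ x, ENNReal.ofReal (Real.exp (-gauge (K ∩ T) x)) =
      ENNReal.ofReal (n ! * (2 * δ) ^ n) := by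
    rw [lintegral_exp_neg_gauge volume (hKT ▸ convex_cube) (hKT ▸ fun _ => neg_mem_cube_neg)
      (hKT ▸ cube_mem_nhds_zero (by linarith) (by linarith)) (hKT ▸ isCompact_cube).isBounded,
      Module.finrank_fin_fun, hvol_KT, ENNReal.ofReal_mul (by positivity), ENNReal.ofReal_natCast]
  refine ⟨K, T, convex_cube, convex_cube, isCompact_cube, isCompact_cube,
    mem_interior_iff_mem_nhds.2 (cube_mem_nhds_zero (by linarith) (by linarith)),
    mem_interior_iff_mem_nhds.2 (cube_mem_nhds_zero (by linarith) (by linarith)), hK, hT, ?_, ?_⟩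
  · rw [hvol_KT, ENNReal.ofReal_lt_ofReal_iff hε]
    calc (2 * δ) ^ n ≤ n ! * (2 * δ) ^ n :=
          le_mul_of_one_le_left (by positivity) (by exact_mod_cast n.factorial_pos)
      _ < ε * Real.exp (-1) := hδ
      _ ≤ ε := mul_le_of_le_one_right hε.le (Real.exp_le_one_iff.2 (by norm_num))
  · have hlower (S : Set (Fin n → ℝ)) (hS : MeasurableSet S) (hS₁ : volume S = 1) :
        ENNReal.ofReal (Real.exp (-1)) ≤ ∫⁻ x, ENNReal.ofReal (Real.exp (-gauge S x)) := by
      simpa [hS₁] using ofReal_exp_neg_one_mul_le_lintegral_exp_neg_gauge volume hS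
    calc ∫⁻ x, ENNReal.ofReal (Real.exp (-gauge (K ∩ T) x))
        < ENNReal.ofReal (ε * Real.exp (-1)) := by
          rw [hlint_KT]
          exact (ENNReal.ofReal_lt_ofReal_iff (by positivity)).2 hδ
      _ = ENNReal.ofReal ε * ENNReal.ofReal (Real.exp (-1)) := ENNReal.ofReal_mul hε.le
      _ ≤ _ := by
          gcongr
          exact le_min (hlower K measurableSet_cube hK) (hlower T measurableSet_cube hT)
end
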